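/- Let d ≥ 2 be an integer, n a real number with n > d/2, and k ∈ Z^d_0. Then the family h ↦ |h ∧ k|² (|k|^n − |k−h|^n)² / ( |h|^{2n+2} |k−h|^{2n} ), indexed by h ∈ Z^d_{0k}, is summable; i.e. G_n(k) := Σ_{h∈Z^d_{0k}} |h ∧ k|² (|k|^n − |k−h|^n)² / ( |h|^{2n+2} |k−h|^{2n} ) is finite (indeed the general term is O(1/|h|^{2n}) as h → ∞ and 2n > d). -/
import Mathlib

noncomputable section

/-- Euclidean norm of a lattice point of `ℤ^d`. -/
def znorm {d : ℕ} (k : Fin d → ℤ) : ℝ := Real.sqrt (∑ i, ((k i : ℝ)) ^ 2)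

lemma znorm_nonneg {d : ℕ} (k : Fin d → ℤ) : 0 ≤ znorm k := Real.sqrt_nonneg _

lemma znorm_sq {d : ℕ} (k : Fin d → ℤ) : znorm k ^ 2 = ∑ i, ((k i : ℝ)) ^ 2 :=
  Real.sq_sqrt (Finset.sum_nonneg fun i _ => sq_nonneg _)

lemma one_le_znorm {d : ℕ} {k : Fin d → ℤ} (hk : k ≠ 0) : 1 ≤ znorm k := by
  obtain ⟨i, hi⟩ := Function.ne_iff.mp hk
  have h1 : (1 : ℝ) ≤ ((k i : ℝ)) ^ 2 := by
    simp only [Pi.zero_apply] at hi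
    have : (1 : ℤ) ≤ (k i) ^ 2 := by
      rcases hi.lt_or_gt with h | h <;> nlinarith
    exact_mod_cast this
  have h2 : (1:ℝ) ≤ ∑ j, ((k j : ℝ)) ^ 2 :=
    h1.trans (Finset.single_le_sum (f := fun j => ((k j : ℝ)) ^ 2)
      (fun j _ => sq_nonneg _) (Finset.mem_univ i))
  calc (1:ℝ) = Real.sqrt 1 := by simp
    _ ≤ znorm k := Real.sqrt_le_sqrt h2

lemma abs_le_znorm {d : ℕ} (k : Fin d → ℤ) (i : Fin d) : |(k i : ℝ)| ≤ znorm k := by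
  rw [← Real.sqrt_sq_eq_abs]
  exact Real.sqrt_le_sqrt
    (Finset.single_le_sum (fun j _ => sq_nonneg ((k j : ℝ))) (Finset.mem_univ i))

lemma summable_int_aux (q : ℝ) (hq : 1 < q) :
    Summable (fun m : ℤ => (1 + |(m : ℝ)|) ^ (-q)) := by
  have h0 : Summable (fun n : ℕ => ((n : ℝ)) ^ (-q)) :=
    Real.summable_nat_rpow.mpr (by linarith)
  have h1 : Summable (fun n : ℕ => (1 + (n : ℝ)) ^ (-q)) := by
    have h2 := h0.comp_injective Nat.succ_injective
    refine h2.congr fun n => ?_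
    simp only [Function.comp_apply, Nat.succ_eq_add_one]
    push_cast
    ring_nf
  apply Summable.of_nat_of_neg <;>
    · refine h1.congr fun n => ?_
      simp

lemma summable_prod_aux (q : ℝ) (hq : 1 < q) (d : ℕ) :
    Summable (fun h : Fin d → ℤ => ∏ i, (1 + |(h i : ℝ)|) ^ (-q)) := by
  induction d with
  | zero =>
    simp only [Finset.univ_eq_empty, Finset.prod_empty]
    exact summable_of_finite_support (Set.toFinite _)
  | succ d ih =>
    rw [← (Fin.consEquiv (fun _ : Fin (d+1) => ℤ)).summable_iff]
    have he : ((fun h : Fin (d+1) → ℤ => ∏ i, (1 + |(h i : ℝ)|) ^ (-q)) ∘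
        (Fin.consEquiv (fun _ : Fin (d+1) => ℤ))) =
        fun p : ℤ × (Fin d → ℤ) =>
          (1 + |(p.1 : ℝ)|) ^ (-q) * ∏ i, (1 + |(p.2 i : ℝ)|) ^ (-q) := by
      funext p
      simp only [Function.comp_apply, Fin.consEquiv_apply]
      rw [Fin.prod_univ_succ]
      simp only [Fin.cons_zero, Fin.cons_succ]
    rw [he]
    exact Summable.mul_of_nonneg (f := fun m : ℤ => (1 + |(m : ℝ)|) ^ (-q))
      (g := fun h : Fin d → ℤ => ∏ i, (1 + |(h i : ℝ)|) ^ (-q))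
      (summable_int_aux q hq) ih
      (fun _ => Real.rpow_nonneg (by positivity) _)
      (fun _ => Finset.prod_nonneg fun i _ => Real.rpow_nonneg (by positivity) _)

/-- Squared norm `|h ∧ k|² = |h|²|k|² − (h·k)²` of the exterior product. -/
def wedgeSq {d : ℕ} (h k : Fin d → ℤ) : ℝ :=
  (∑ i, ((h i : ℝ)) ^ 2) * (∑ i, ((k i : ℝ)) ^ 2) - (∑ i, (h i : ℝ) * (k i : ℝ)) ^ 2

lemma wedgeSq' {d : ℕ} (h k : Fin d → ℤ) : wedgeSq h k =
    (∑ i, ((h i : ℝ)) ^ 2) * (∑ i, ((k i : ℝ)) ^ 2) - (∑ i, (h i : ℝ) * (k i : ℝ)) ^ 2 := rfl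

lemma wedgeSq_nonneg {d : ℕ} (h k : Fin d → ℤ) : 0 ≤ wedgeSq h k := by
  have hcs := Finset.sum_mul_sq_le_sq_mul_sq Finset.univ
    (fun i => ((h i : ℝ))) (fun i => ((k i : ℝ)))
  rw [wedgeSq']
  linarith

lemma wedgeSq_le {d : ℕ} (h k : Fin d → ℤ) : wedgeSq h k ≤ znorm h ^ 2 * znorm k ^ 2 := by
  rw [wedgeSq', znorm_sq, znorm_sq]
  nlinarith [sq_nonneg (∑ i, (h i : ℝ) * (k i : ℝ))]

/-- for `n > d/2` and `k ∈ ℤ^d_0`, the family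
`h ↦ |h ∧ k|² (|k|^n − |k−h|^n)² / (|h|^{2n+2} |k−h|^{2n})`, indexed by
`h ∈ ℤ^d_{0k}`, is summable, i.e. `G_n(k) < ∞`. -/
theorem stmt13 (d : ℕ) (hd : 2 ≤ d) (n : ℝ) (hn : (d : ℝ) / 2 < n)
    (k : Fin d → ℤ) (hk : k ≠ 0) :
    Summable (fun h : {h : Fin d → ℤ // h ≠ 0 ∧ h ≠ k} =>
      wedgeSq h.1 k * (znorm k ^ n - znorm (k - h.1) ^ n) ^ 2 /
        (znorm h.1 ^ (2 * n + 2) * znorm (k - h.1) ^ (2 * n))) := by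
  have hd0 : (0 : ℝ) < d := by positivity
  have hn0 : 0 < n := lt_of_le_of_lt (by positivity) hn
  set q : ℝ := 2 * n / d with hqdef
  have hq : 1 < q := by
    rw [hqdef, lt_div_iff₀ hd0]
    linarith
  have hK : 1 ≤ znorm k := one_le_znorm hk
  have hKpos : 0 < znorm k := lt_of_lt_of_le one_pos hK
  set K := znorm k with hKdef
  set D : ℝ := 2 * K ^ (2 * n + 2) + 2 * K ^ (2 : ℝ) with hDdef
  have hDpos : 0 < D := by
    have := Real.rpow_pos_of_pos hKpos (2 * n + 2)
    have := Real.rpow_pos_of_pos hKpos (2 : ℝ)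
    positivity
  set C : ℝ := D * 2 ^ (2 * n) with hCdef
  have hsum : Summable (fun h : {h : Fin d → ℤ // h ≠ 0 ∧ h ≠ k} =>
      C * ∏ i, (1 + |(h.1 i : ℝ)|) ^ (-q)) := by
    exact (((summable_prod_aux q hq d).subtype
      {h : Fin d → ℤ | h ≠ 0 ∧ h ≠ k}).mul_left C)
  apply hsum.of_nonneg_of_le
  · rintro ⟨h, h0, hk'⟩
    exact div_nonneg (mul_nonneg (wedgeSq_nonneg _ _) (sq_nonneg _))
      (mul_nonneg (Real.rpow_nonneg (znorm_nonneg _) _)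
        (Real.rpow_nonneg (znorm_nonneg _) _))
  · rintro ⟨h, h0, hk'⟩
    dsimp only
    set A := znorm h with hAdef
    set B := znorm (k - h) with hBdef
    have hA : 1 ≤ A := one_le_znorm h0
    have hApos : 0 < A := lt_of_lt_of_le one_pos hA
    have hB : 1 ≤ B := by
      apply one_le_znorm
      intro hc
      have hkh : k = h := sub_eq_zero.mp hc
      exact hk' hkh.symm
    have hBpos : 0 < B := lt_of_lt_of_le one_pos hB
    have hB1 : 1 ≤ B ^ (2 * n) := Real.one_le_rpow hB (by positivity)
    -- Step I : term ≤ D * A ^ (-(2*n))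
    have step1 : wedgeSq h k * (K ^ n - B ^ n) ^ 2 / (A ^ (2 * n + 2) * B ^ (2 * n))
        ≤ D * A ^ (-(2 * n)) := by
      have hden : 0 < A ^ (2 * n + 2) * B ^ (2 * n) :=
        mul_pos (Real.rpow_pos_of_pos hApos _) (Real.rpow_pos_of_pos hBpos _)
      rw [div_le_iff₀ hden]
      have eA : A ^ (-(2 * n)) * A ^ (2 * n + 2) = A ^ (2 : ℝ) := by
        rw [← Real.rpow_add hApos]; ring_nf
      have eRHS : D * A ^ (-(2 * n)) * (A ^ (2 * n + 2) * B ^ (2 * n))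
          = D * (A ^ (2 : ℝ) * B ^ (2 * n)) := by
        calc D * A ^ (-(2 * n)) * (A ^ (2 * n + 2) * B ^ (2 * n))
            = D * ((A ^ (-(2 * n)) * A ^ (2 * n + 2)) * B ^ (2 * n)) := by ring
          _ = D * (A ^ (2 : ℝ) * B ^ (2 * n)) := by rw [eA]
      rw [eRHS]
      have hw : wedgeSq h k ≤ A ^ (2 : ℝ) * K ^ (2 : ℝ) := by
        have := wedgeSq_le h k
        rw [← Real.rpow_natCast A 2, ← Real.rpow_natCast K 2] at this
        simpa using this
      have eKn : (K ^ n) ^ 2 = K ^ (2 * n) := by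
        rw [← Real.rpow_natCast (K ^ n) 2, ← Real.rpow_mul hKpos.le]
        norm_num; ring_nf
      have eBn : (B ^ n) ^ 2 = B ^ (2 * n) := by
        rw [← Real.rpow_natCast (B ^ n) 2, ← Real.rpow_mul hBpos.le]
        norm_num; ring_nf
      have hsq : (K ^ n - B ^ n) ^ 2 ≤ 2 * K ^ (2 * n) + 2 * B ^ (2 * n) := by
        nlinarith [sq_nonneg (K ^ n + B ^ n), eKn, eBn]
      have eK : K ^ (2 : ℝ) * K ^ (2 * n) = K ^ (2 * n + 2) := by
        rw [← Real.rpow_add hKpos]; ring_nf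
      have ha2 : (0 : ℝ) < A ^ (2 : ℝ) := Real.rpow_pos_of_pos hApos _
      have hk2 : (0 : ℝ) < K ^ (2 : ℝ) := Real.rpow_pos_of_pos hKpos _
      have hkn : (0 : ℝ) < K ^ (2 * n) := Real.rpow_pos_of_pos hKpos _
      have hk22 : (0 : ℝ) < K ^ (2 * n + 2) := Real.rpow_pos_of_pos hKpos _
      calc wedgeSq h k * (K ^ n - B ^ n) ^ 2
          ≤ (A ^ (2 : ℝ) * K ^ (2 : ℝ)) * (2 * K ^ (2 * n) + 2 * B ^ (2 * n)) := by
            apply mul_le_mul hw hsq (sq_nonneg _) (by positivity)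
        _ = 2 * A ^ (2 : ℝ) * (K ^ (2 : ℝ) * K ^ (2 * n))
              + 2 * (K ^ (2 : ℝ) * (A ^ (2 : ℝ) * B ^ (2 * n))) := by ring
        _ = 2 * A ^ (2 : ℝ) * K ^ (2 * n + 2)
              + 2 * (K ^ (2 : ℝ) * (A ^ (2 : ℝ) * B ^ (2 * n))) := by rw [eK]
        _ ≤ D * (A ^ (2 : ℝ) * B ^ (2 * n)) := by
            rw [hDdef]
            nlinarith [mul_nonneg (mul_nonneg (by positivity : (0:ℝ) ≤ 2 * A ^ (2:ℝ))
              hk22.le) (by linarith : (0:ℝ) ≤ B ^ (2 * n) - 1)]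
    -- Step II : A ^ (-(2*n)) ≤ 2 ^ (2*n) * ∏ (1 + |h i|) ^ (-q)
    have hprodpos : (0 : ℝ) < ∏ i, (1 + |(h i : ℝ)|) := by positivity
    have hprodle : (∏ i, (1 + |(h i : ℝ)|)) ≤ (2 * A) ^ d := by
      calc (∏ i, (1 + |(h i : ℝ)|)) ≤ ∏ _i : Fin d, (2 * A) := by
            apply Finset.prod_le_prod (fun i _ => by positivity)
            intro i _
            have := abs_le_znorm h i
            rw [← hAdef] at this
            linarith
        _ = (2 * A) ^ d := by
            rw [Finset.prod_const, Finset.card_univ, Fintype.card_fin]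
    have ed : ((2 * A) ^ d : ℝ) ^ (-q) = (2 * A) ^ (-(2 * n)) := by
      rw [← Real.rpow_natCast (2 * A) d, ← Real.rpow_mul (by positivity)]
      congr 1
      rw [hqdef]
      field_simp
    have hstep : (2 * A) ^ (-(2 * n) : ℝ) ≤ ∏ i, (1 + |(h i : ℝ)|) ^ (-q) := by
      rw [Real.finset_prod_rpow _ _ (fun i _ => by positivity) _, ← ed]
      exact Real.rpow_le_rpow_of_nonpos hprodpos hprodle (by linarith)
    have e2A : (2 * A : ℝ) ^ (-(2 * n) : ℝ) = 2 ^ (-(2 * n) : ℝ) * A ^ (-(2 * n)) :=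
      Real.mul_rpow (by norm_num) hApos.le
    have hAfin : A ^ (-(2 * n) : ℝ) ≤ 2 ^ (2 * n : ℝ) * ∏ i, (1 + |(h i : ℝ)|) ^ (-q) := by
      have h2 : (0 : ℝ) < 2 ^ (2 * n : ℝ) := Real.rpow_pos_of_pos two_pos _
      have e22 : (2 : ℝ) ^ (2 * n : ℝ) * 2 ^ (-(2 * n) : ℝ) = 1 := by
        rw [← Real.rpow_add two_pos]; norm_num
      calc A ^ (-(2 * n) : ℝ) = 2 ^ (2 * n : ℝ) * (2 ^ (-(2 * n) : ℝ) * A ^ (-(2 * n))) := by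
            rw [← mul_assoc, e22, one_mul]
        _ = 2 ^ (2 * n : ℝ) * (2 * A) ^ (-(2 * n) : ℝ) := by rw [e2A]
        _ ≤ 2 ^ (2 * n : ℝ) * ∏ i, (1 + |(h i : ℝ)|) ^ (-q) :=
            mul_le_mul_of_nonneg_left hstep h2.le
    calc wedgeSq h k * (K ^ n - B ^ n) ^ 2 / (A ^ (2 * n + 2) * B ^ (2 * n))
        ≤ D * A ^ (-(2 * n)) := step1
      _ ≤ D * (2 ^ (2 * n : ℝ) * ∏ i, (1 + |(h i : ℝ)|) ^ (-q)) :=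
          mul_le_mul_of_nonneg_left hAfin hDpos.le
      _ = C * ∏ i, (1 + |(h i : ℝ)|) ^ (-q) := by rw [hCdef]; ring
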